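/- For all z, t, l, x ∈ ℂ, s(zx)[d(zl)s(z(l−t)) − s(zl)d(z(l−t))] + d(zx)[(c(zl)−1)d(z(l−t)) − s(zl)s(z(l−t))] = d(z(x−l))d(−zt) − d(zx)d(z(l−t)) − d(z(x−t))d(−zl). -/
import Mathlib


open Complex

noncomputable def ζ₁ : ℂ := 1
noncomputable def ζ₂ : ℂ := (-1 + Complex.I * Real.sqrt 3) / 2
noncomputable def ζ₃ : ℂ := (-1 - Complex.I * Real.sqrt 3) / 2

noncomputable def c (z : ℂ) : ℂ :=
  (Complex.exp (z * ζ₁) + Complex.exp (z * ζ₂) + Complex.exp (z * ζ₃)) / 3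
noncomputable def s (z : ℂ) : ℂ :=
  (ζ₁⁻¹ * Complex.exp (z * ζ₁) + ζ₂⁻¹ * Complex.exp (z * ζ₂) + ζ₃⁻¹ * Complex.exp (z * ζ₃)) / 3
noncomputable def d (z : ℂ) : ℂ :=
  (ζ₁⁻¹ ^ 2 * Complex.exp (z * ζ₁) + ζ₂⁻¹ ^ 2 * Complex.exp (z * ζ₂) + ζ₃⁻¹ ^ 2 * Complex.exp (z * ζ₃)) / 3

lemma sqrt3_sq : (Real.sqrt 3 : ℂ)^2 = 3 := by
  norm_cast; rw [Real.sq_sqrt] <;> norm_num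

lemma hmul : ζ₂ * ζ₃ = 1 := by
  unfold ζ₂ ζ₃
  linear_combination (1/4 : ℂ) * sqrt3_sq - ((Real.sqrt 3:ℂ)^2/4) * Complex.I_sq

lemma hsum : ζ₂ + ζ₃ = -1 := by unfold ζ₂ ζ₃; ring

lemma hinv2 : ζ₂⁻¹ = ζ₃ := inv_eq_of_mul_eq_one_right hmul
lemma hinv3 : ζ₃⁻¹ = ζ₂ := inv_eq_of_mul_eq_one_left hmul

lemma hquad : ζ₂ ^ 2 + ζ₂ + 1 = 0 := by
  have h : ζ₃ = -1 - ζ₂ := by linear_combination hsum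
  have hm := hmul
  rw [h] at hm
  linear_combination -hm

set_option maxHeartbeats 1000000 in
theorem identity_c (z t l x : ℂ) :
    s (z * x) * (d (z * l) * s (z * (l - t)) - s (z * l) * d (z * (l - t))) +
      d (z * x) * ((c (z * l) - 1) * d (z * (l - t)) - s (z * l) * s (z * (l - t))) =
    d (z * (x - l)) * d (-(z * t)) - d (z * x) * d (z * (l - t)) -
      d (z * (x - t)) * d (-(z * l)) := by
  have h3 : ζ₃ = -1 - ζ₂ := by linear_combination hsum
  simp only [c, s, d, ζ₁, hinv2, hinv3, inv_one, one_pow, one_mul, mul_one,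
    mul_sub, sub_mul, neg_mul, Complex.exp_sub, Complex.exp_neg]
  set a1 := Complex.exp (z * x) with ha1
  set a2 := Complex.exp (z * x * ζ₂) with ha2
  set a3 := Complex.exp (z * x * ζ₃) with ha3
  set b1 := Complex.exp (z * l) with hb1
  set b2 := Complex.exp (z * l * ζ₂) with hb2
  set b3 := Complex.exp (z * l * ζ₃) with hb3
  set c1 := Complex.exp (z * t) with hc1
  set c2 := Complex.exp (z * t * ζ₂) with hc2
  set c3 := Complex.exp (z * t * ζ₃) with hc3
  have hzero : z * l + z * l * ζ₂ + z * l * ζ₃ = 0 := by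
    have : (1 : ℂ) + ζ₂ + ζ₃ = 0 := by linear_combination hsum
    linear_combination (z * l) * this
  have hzero' : z * t + z * t * ζ₂ + z * t * ζ₃ = 0 := by
    have : (1 : ℂ) + ζ₂ + ζ₃ = 0 := by linear_combination hsum
    linear_combination (z * t) * this
  have hbprod : b1 * b2 * b3 = 1 := by
    rw [hb1, hb2, hb3, ← Complex.exp_add, ← Complex.exp_add, hzero, Complex.exp_zero]
  have hcprod : c1 * c2 * c3 = 1 := by
    rw [hc1, hc2, hc3, ← Complex.exp_add, ← Complex.exp_add, hzero', Complex.exp_zero]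
  have ib1 : b1⁻¹ = b2 * b3 := inv_eq_of_mul_eq_one_right (by linear_combination hbprod)
  have ib2 : b2⁻¹ = b1 * b3 := inv_eq_of_mul_eq_one_right (by linear_combination hbprod)
  have ib3 : b3⁻¹ = b1 * b2 := inv_eq_of_mul_eq_one_right (by linear_combination hbprod)
  have ic1 : c1⁻¹ = c2 * c3 := inv_eq_of_mul_eq_one_right (by linear_combination hcprod)
  have ic2 : c2⁻¹ = c1 * c3 := inv_eq_of_mul_eq_one_right (by linear_combination hcprod)
  have ic3 : c3⁻¹ = c1 * c2 := inv_eq_of_mul_eq_one_right (by linear_combination hcprod)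
  simp only [div_eq_mul_inv, ib1, ib2, ib3, ic1, ic2, ic3]
  rw [h3]
  linear_combination ((4/27 : ℂ)*a3*b2*b3*c1*c2*ζ₂^2 + (4/27 : ℂ)*a3*b1*b3*c1*c2*ζ₂^2 + (2/27 : ℂ)*a3*b1*b2*c2*c3*ζ₂ + (-2/27 : ℂ)*a3*b1*b2*c1*c3*ζ₂ + (-2/27 : ℂ)*a3*b1*b2*c1*c3*ζ₂^2 + (4/27 : ℂ)*a2*b2*b3*c1*c3 + (8/27 : ℂ)*a2*b2*b3*c1*c3*ζ₂ + (4/27 : ℂ)*a2*b2*b3*c1*c3*ζ₂^2 + (-2/27 : ℂ)*a2*b1*b3*c2*c3 + (-2/27 : ℂ)*a2*b1*b3*c2*c3*ζ₂ + (-2/27 : ℂ)*a2*b1*b3*c1*c2*ζ₂ + (-2/27 : ℂ)*a2*b1*b3*c1*c2*ζ₂^2 + (4/27 : ℂ)*a2*b1*b2*c1*c3 + (8/27 : ℂ)*a2*b1*b2*c1*c3*ζ₂ + (4/27 : ℂ)*a2*b1*b2*c1*c3*ζ₂^2 + (-2/27 : ℂ)*a1*b2*b3*c1*c3 + (-2/27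 : ℂ)*a1*b2*b3*c1*c3*ζ₂ + (2/27 : ℂ)*a1*b2*b3*c1*c2*ζ₂ + (4/27 : ℂ)*a1*b1*b3*c2*c3 + (4/27 : ℂ)*a1*b1*b2*c2*c3) * hquad + (0:ℂ) * hbprod + (0:ℂ) * hcprod
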